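/- arXiv:2302.10116 — 4 statements merged into one kernel-verified Lean document; each statement's English description precedes it below -/
import Mathlib

section
/- Let ℏ, m, ω > 0 be real numbers, let s, f : ℝ → ℂ be smooth functions, u = deriv s, and define the number operator by (N̂ f)(x) = (m*ω/(2*ℏ)) * x^2 * f(x) - (ℏ/(2*m*ω)) * deriv^[2] f x - (1/2) * f(x). Then for every x ∈ ℝ, exp(-s(x)) * (N̂ (fun t => exp(s(t)) * f(t)))(x) = (N̂ f)(x) - (ℏ/(2*m*ω)) * (2 * u x * deriv f x + deriv u x * f x) - (ℏ/(2*m*ω)) * (u x)^2 * f(x). -/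
/-- The harmonic-oscillator number operator
`(N̂ f)(x) = (mω/(2ℏ)) x² f(x) - (ℏ/(2mω)) f''(x) - (1/2) f(x)`. -/
noncomputable def numberOp (ℏ m ω : ℝ) (f : ℝ → ℂ) : ℝ → ℂ := fun x =>
  ((m * ω / (2 * ℏ) : ℝ) : ℂ) * (x : ℂ) ^ 2 * f x
    - ((ℏ / (2 * m * ω) : ℝ) : ℂ) * deriv^[2] f x - (1 / 2) * f x

/-- Theorem 2.1: the geometric number operator `N̂^{(r)} = e^{-s} N̂ e^{s}` equals
`N̂ - (ℏ/(2mω))(2u d/dx + u_x) - (ℏ/(2mω)) u²`, with `u = deriv s`. -/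
theorem geometric_number_operator (ℏ m ω : ℝ) (hℏ : 0 < ℏ) (hm : 0 < m) (hω : 0 < ω)
    (s f : ℝ → ℂ) (hs : ContDiff ℝ (⊤ : ℕ∞) s) (hf : ContDiff ℝ (⊤ : ℕ∞) f) (u : ℝ → ℂ) (hu : u = deriv s)
    (x : ℝ) :
    Complex.exp (-s x) * numberOp ℏ m ω (fun t => Complex.exp (s t) * f t) x
      = numberOp ℏ m ω f x
        - ((ℏ / (2 * m * ω) : ℝ) : ℂ) * (2 * u x * deriv f x + deriv u x * f x)
        - ((ℏ / (2 * m * ω) : ℝ) : ℂ) * (u x) ^ 2 * f x := by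
  have hs' : ContDiff ℝ ((⊤ : ℕ∞) : WithTop ℕ∞) (deriv s) := by simpa using (hs.of_le (by simp)).iterate_deriv 1
  have hf' : ContDiff ℝ ((⊤ : ℕ∞) : WithTop ℕ∞) (deriv f) := by simpa using (hf.of_le (by simp)).iterate_deriv 1
  have hg1 : deriv (fun t => Complex.exp (s t) * f t)
      = fun t => Complex.exp (s t) * (deriv s t * f t + deriv f t) := by
    funext t
    have h1 : HasDerivAt (fun t => Complex.exp (s t))
        (Complex.exp (s t) * deriv s t) t := (hs.differentiable (by simp) t).hasDerivAt.cexp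
    have h2 := h1.fun_mul (hf.differentiable (by simp) t).hasDerivAt
    rw [h2.deriv]; ring
  have hg2 : deriv^[2] (fun t => Complex.exp (s t) * f t) x
      = Complex.exp (s x) * (deriv^[2] f x + 2 * deriv s x * deriv f x
          + (deriv (deriv s) x + (deriv s x) ^ 2) * f x) := by
    show deriv (deriv (fun t => Complex.exp (s t) * f t)) x = _
    rw [hg1]
    have h1 : HasDerivAt (fun t => Complex.exp (s t))
        (Complex.exp (s x) * deriv s x) x := (hs.differentiable (by simp) x).hasDerivAt.cexp
    have h2 : HasDerivAt (fun t => deriv s t * f t + deriv f t)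
        (deriv (deriv s) x * f x + deriv s x * deriv f x + deriv (deriv f) x) x :=
      ((hs'.differentiable (by simp) x).hasDerivAt.mul
        (hf.differentiable (by simp) x).hasDerivAt).add (hf'.differentiable (by simp) x).hasDerivAt
    rw [(h1.fun_mul h2).deriv]
    show _ = Complex.exp (s x) * (deriv (deriv f) x + 2 * deriv s x * deriv f x
          + (deriv (deriv s) x + (deriv s x) ^ 2) * f x)
    ring
  have hE : Complex.exp (-s x) * Complex.exp (s x) = 1 := by
    rw [← Complex.exp_add]; simp
  simp only [numberOp, hg2, hu]
  show Complex.exp (-s x) * (_ * _ * (Complex.exp (s x) * f x) - _ - 1/2 * (Complex.exp (s x) * f x)) = _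
  have : ∀ a b c : ℂ, Complex.exp (-s x) * (a * (Complex.exp (s x) * f x)
      - b * (Complex.exp (s x) * c) - 1/2 * (Complex.exp (s x) * f x))
      = a * f x - b * c - 1/2 * f x := by
    intro a b c
    calc Complex.exp (-s x) * (a * (Complex.exp (s x) * f x)
          - b * (Complex.exp (s x) * c) - 1/2 * (Complex.exp (s x) * f x))
        = (Complex.exp (-s x) * Complex.exp (s x)) * (a * f x - b * c - 1/2 * f x) := by ring
      _ = a * f x - b * c - 1/2 * f x := by rw [hE]; ring
  rw [this]; ring
end

section
/- Let ℏ, m > 0 be real, c₁ = -ℏ^2/(2*m), V : ℝ → ℂ any function, s, f : ℝ → ℂ smooth, u = deriv s, (Ĥ f)(x) = c₁ * deriv^[2] f x + V(x) * f(x), and [s, Â] f := s • (Â f) - Â (s • f). Then for every x ∈ ℝ: (i) ([s, [s, Ĥ]] f)(x) = 2 * c₁ * (u x)^2 * f(x); (ii) ([s, [s, [s, Ĥ]]] f)(x) = 0. -/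
/-- The Hamiltonian operator `(Ĥ f)(x) = c₁ f''(x) + V(x) f(x)`. -/
noncomputable def hamOp (c₁ : ℂ) (V : ℝ → ℂ) (f : ℝ → ℂ) : ℝ → ℂ := fun x =>
  c₁ * deriv^[2] f x + V x * f x

/-- The quantum Poisson bracket of multiplication by `s` with an operator `Â`:
`[s, Â] f = s • (Â f) - Â (s • f)`. -/
noncomputable def qpb (s : ℝ → ℂ) (A : (ℝ → ℂ) → (ℝ → ℂ)) (f : ℝ → ℂ) : ℝ → ℂ := fun x =>
  s x * A f x - A (fun t => s t * f t) x

lemma d2_mul (s g : ℝ → ℂ) (hs : ContDiff ℝ (⊤ : ℕ∞) s) (hg : ContDiff ℝ (⊤ : ℕ∞) g) (y : ℝ) :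
    deriv^[2] (fun t => s t * g t) y =
      deriv (deriv s) y * g y + 2 * deriv s y * deriv g y + s y * deriv (deriv g) y := by
  have hds : Differentiable ℝ s := hs.differentiable (by simp)
  have hdg : Differentiable ℝ g := hg.differentiable (by simp)
  have hs1 : Differentiable ℝ (deriv s) :=
    (contDiff_infty_iff_deriv.mp (hs.of_le (by simp))).2.differentiable (by simp)
  have hg1 : Differentiable ℝ (deriv g) :=
    (contDiff_infty_iff_deriv.mp (hg.of_le (by simp))).2.differentiable (by simp)
  have h1 : deriv (fun t => s t * g t) = fun t => deriv s t * g t + s t * deriv g t :=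
    funext fun t => deriv_fun_mul (hds t) (hdg t)
  show deriv (deriv (fun t => s t * g t)) y = _
  rw [h1, deriv_fun_add ((hs1 y).fun_mul (hdg y)) ((hds y).fun_mul (hg1 y)),
    deriv_fun_mul (hs1 y) (hdg y), deriv_fun_mul (hds y) (hg1 y)]
  ring

lemma qpb2_eq (c₁ : ℂ) (V : ℝ → ℂ) (s f : ℝ → ℂ)
    (hs : ContDiff ℝ (⊤ : ℕ∞) s) (hf : ContDiff ℝ (⊤ : ℕ∞) f) (x : ℝ) :
    qpb s (qpb s (hamOp c₁ V)) f x = 2 * c₁ * (deriv s x) ^ 2 * f x := by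
  have hds : Differentiable ℝ s := hs.differentiable (by simp)
  have hdf : Differentiable ℝ f := hf.differentiable (by simp)
  have e1 : deriv (fun t => s t * f t) x = deriv s x * f x + s x * deriv f x :=
    deriv_fun_mul (hds x) (hdf x)
  have iter2 : ∀ g : ℝ → ℂ, deriv^[2] g = deriv (deriv g) := fun g => by
    simp [Function.iterate_succ, Function.comp_def]
  have e2 := d2_mul s f hs hf x
  have e3 := d2_mul s (fun t => s t * f t) hs (hs.mul hf) x
  rw [iter2] at e2 e3
  rw [e2, e1] at e3
  simp only [qpb, hamOp, iter2, e2, e3]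
  ring

/-- `[s,[s,Ĥ]] f = 2 c₁ u² f` (so `E^{(s)} = -[s,[s,Ĥ^{(cl)}]] = -2c₁u²`) and
`[s,[s,[s,Ĥ]]] f = 0`, with `c₁ = -ℏ²/(2m)` and `u = deriv s`. -/
theorem ham_higher_commutators (ℏ m : ℝ) (hℏ : 0 < ℏ) (hm : 0 < m) (c₁ : ℂ)
    (hc₁ : c₁ = ((-ℏ ^ 2 / (2 * m) : ℝ) : ℂ)) (V : ℝ → ℂ) (s f : ℝ → ℂ)
    (hs : ContDiff ℝ (⊤ : ℕ∞) s) (hf : ContDiff ℝ (⊤ : ℕ∞) f) (u : ℝ → ℂ) (hu : u = deriv s) (x : ℝ) :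
    qpb s (qpb s (hamOp c₁ V)) f x = 2 * c₁ * (u x) ^ 2 * f x
      ∧ qpb s (qpb s (qpb s (hamOp c₁ V))) f x = 0 := by
  subst hu
  refine ⟨qpb2_eq c₁ V s f hs hf x, ?_⟩
  have h1 := qpb2_eq c₁ V s f hs hf x
  have h2 := qpb2_eq c₁ V s (fun t => s t * f t) hs (hs.mul hf) x
  show s x * qpb s (qpb s (hamOp c₁ V)) f x
      - qpb s (qpb s (hamOp c₁ V)) (fun t => s t * f t) x = 0
  rw [h1, h2]
  ring
end

section
/- Let ℏ, m > 0 be real, c₁ = -ℏ^2/(2*m), V : ℝ → ℂ any function, s, f : ℝ → ℂ smooth, (Ĥ f)(x) = c₁ * deriv^[2] f x + V(x) * f(x), and [s, Â] f := s • (Â f) - Â (s • f). Then for every x ∈ ℝ, exp(-s(x)) * (Ĥ (fun t => exp(s(t)) * f(t)))(x) = (Ĥ f)(x) - ([s, Ĥ] f)(x) + (1/2) * ([s, [s, Ĥ]] f)(x). -/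
private lemma sdm (g h : ℝ → ℂ) (hg : ContDiff ℝ (⊤ : ℕ∞) g) (hh : ContDiff ℝ (⊤ : ℕ∞) h) (x : ℝ) :
    deriv^[2] (fun t => g t * h t) x
      = deriv (deriv g) x * h x + 2 * (deriv g x * deriv h x) + g x * deriv (deriv h) x := by
  obtain ⟨hg1, hgd⟩ := contDiff_infty_iff_deriv.mp hg
  obtain ⟨hh1, hhd⟩ := contDiff_infty_iff_deriv.mp hh
  have hg' := (contDiff_infty_iff_deriv.mp hgd).1
  have hh' := (contDiff_infty_iff_deriv.mp hhd).1
  have h1 : deriv (fun t => g t * h t) = fun t => deriv g t * h t + g t * deriv h t :=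
    funext fun t => deriv_mul (hg1 t) (hh1 t)
  have h2 : deriv^[2] (fun t => g t * h t) x = deriv (deriv (fun t => g t * h t)) x := rfl
  rw [h2, h1]
  have h3 : HasDerivAt (fun t => deriv g t * h t + g t * deriv h t)
      ((deriv (deriv g) x * h x + deriv g x * deriv h x)
        + (deriv g x * deriv h x + g x * deriv (deriv h) x)) x :=
    (((hg' x).hasDerivAt.mul (hh1 x).hasDerivAt)).add
      (((hg1 x).hasDerivAt.mul (hh' x).hasDerivAt))
  rw [h3.deriv]; ring



/-- Equation (2.3), the Baker–Hausdorff expansion of the Ri-operator: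
`e^{-s} Ĥ (e^{s} f) = Ĥ f - [s, Ĥ] f + (1/2) [s, [s, Ĥ]] f` with `c₁ = -ℏ²/(2m)`. -/
theorem ri_operator_baker_hausdorff (ℏ m : ℝ) (hℏ : 0 < ℏ) (hm : 0 < m) (c₁ : ℂ)
    (hc₁ : c₁ = ((-ℏ ^ 2 / (2 * m) : ℝ) : ℂ)) (V : ℝ → ℂ) (s f : ℝ → ℂ)
    (hs : ContDiff ℝ (⊤ : ℕ∞) s) (hf : ContDiff ℝ (⊤ : ℕ∞) f) (x : ℝ) :
    Complex.exp (-s x) * hamOp c₁ V (fun t => Complex.exp (s t) * f t) x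
      = hamOp c₁ V f x - qpb s (hamOp c₁ V) f x
        + (1 / 2) * qpb s (qpb s (hamOp c₁ V)) f x := by
  have hs' : ContDiff ℝ (⊤ : ℕ∞) s := hs.of_le (by simp)
  have hf' : ContDiff ℝ (⊤ : ℕ∞) f := hf.of_le (by simp)
  obtain ⟨hs1, hsd⟩ := contDiff_infty_iff_deriv.mp hs'
  obtain ⟨hf1, hfd⟩ := contDiff_infty_iff_deriv.mp hf'
  have hsd1 := (contDiff_infty_iff_deriv.mp hsd).1
  have hE : ContDiff ℝ (⊤ : ℕ∞) (fun t => Complex.exp (s t)) :=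
    (Complex.contDiff_exp (𝕜 := ℝ)).comp hs'
  have hE1f := (contDiff_infty_iff_deriv.mp hE).1
  have hdE : deriv (fun t => Complex.exp (s t)) = fun t => Complex.exp (s t) * deriv s t :=
    funext fun t => ((hs1 t).hasDerivAt.cexp).deriv
  have hE1 : deriv (fun t => Complex.exp (s t)) x = Complex.exp (s x) * deriv s x := by
    rw [hdE]
  have hE2 : deriv (deriv (fun t => Complex.exp (s t))) x
      = Complex.exp (s x) * deriv s x * deriv s x + Complex.exp (s x) * deriv (deriv s) x := by
    rw [hdE]
    have h3 : HasDerivAt (fun t => Complex.exp (s t) * deriv s t)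
        (Complex.exp (s x) * deriv s x * deriv s x
          + Complex.exp (s x) * deriv (deriv s) x) x := by
      have := ((hs1 x).hasDerivAt.cexp).mul (hsd1 x).hasDerivAt
      exact this
    exact h3.deriv
  have hsf : ContDiff ℝ (⊤ : ℕ∞) (fun t => s t * f t) := hs'.mul hf'
  have r1 := sdm (fun t => Complex.exp (s t)) f hE hf' x
  have r2 := sdm s f hs' hf' x
  have r3 := sdm s (fun t => s t * f t) hs' hsf x
  have dsf : deriv (fun t => s t * f t) x = deriv s x * f x + s x * deriv f x :=
    deriv_mul (hs1 x) (hf1 x)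
  have d2sf : deriv (deriv (fun t => s t * f t)) x
      = deriv (deriv s) x * f x + 2 * (deriv s x * deriv f x) + s x * deriv (deriv f) x := r2
  have df2 : deriv^[2] f x = deriv (deriv f) x := rfl
  rw [hE1, hE2] at r1
  rw [dsf, d2sf] at r3
  simp only [hamOp, qpb, df2, r1, r2, r3]
  have hne : Complex.exp (s x) ≠ 0 := Complex.exp_ne_zero _
  rw [Complex.exp_neg]
  field_simp
  ring
end

section
/- Let ℏ, m > 0 be real, c₁ = -ℏ^2/(2*m), b_c = -Complex.I*ℏ/(2*m), let s : ℝ → ℝ be smooth, u = deriv s, C₀ ∈ ℝ with C₀ ≠ 0, A(x) = C₀ * Real.exp (s x), and define (ŵ A)(x) = b_c * (2 * u x * deriv A x + deriv u x * A x) (viewing A as ℝ → ℂ). Then for every x ∈ ℝ: (i) (ŵ A)(x) / A(x) = b_c * (deriv^[2] s x + 2 * (deriv s x)^2); (ii) the potenergy E^{(wg)}(x) := -Complex.I * ℏ * (ŵ A)(x) / A(x) satisfies E^{(wg)}(x) = c₁ * (deriv^[2] A x / A x) + c₁ * (deriv s x)^2. -/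
/-- For the amplitude `A = C₀ e^{s}`, the G-dynamics of type I
`(ŵ A)(x) = b_c (2 u(x) A'(x) + u_x(x) A(x))` (with `b_c = -iℏ/(2m)`, `u = deriv s`,
viewing `A` as `ℝ → ℂ`) satisfies
(i) `(ŵ A)(x)/A(x) = b_c (s''(x) + 2 (s'(x))²)`, and
(ii) the potenergy `E^{(wg)}(x) = -iℏ (ŵ A)(x)/A(x)` equals
`c₁ A''(x)/A(x) + c₁ (s'(x))²` where `c₁ = -ℏ²/(2m)`. -/
theorem potenergy_exponential_amplitude (ℏ m : ℝ) (hℏ : 0 < ℏ) (hm : 0 < m)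
    (c₁ : ℝ) (hc₁ : c₁ = -ℏ ^ 2 / (2 * m)) (bc : ℂ)
    (hbc : bc = -Complex.I * (ℏ : ℂ) / (2 * (m : ℂ)))
    (s : ℝ → ℝ) (hs : ContDiff ℝ (⊤ : ℕ∞) s) (u : ℝ → ℝ) (hu : u = deriv s)
    (C₀ : ℝ) (hC₀ : C₀ ≠ 0) (A : ℝ → ℝ) (hA : ∀ x, A x = C₀ * Real.exp (s x))
    (wA : ℝ → ℂ)
    (hwA : ∀ x, wA x = bc * (2 * ((u x : ℝ) : ℂ) * ((deriv A x : ℝ) : ℂ)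
      + ((deriv u x : ℝ) : ℂ) * ((A x : ℝ) : ℂ)))
    (x : ℝ) :
    wA x / ((A x : ℝ) : ℂ)
        = bc * (((deriv^[2] s x : ℝ) : ℂ) + 2 * (((deriv s x : ℝ) : ℂ)) ^ 2)
      ∧ -Complex.I * (ℏ : ℂ) * wA x / ((A x : ℝ) : ℂ)
        = (c₁ : ℂ) * (((deriv^[2] A x : ℝ) : ℂ) / ((A x : ℝ) : ℂ))
          + (c₁ : ℂ) * (((deriv s x : ℝ) : ℂ)) ^ 2 := by
  have hsdiff : Differentiable ℝ s := hs.differentiable (by simp)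
  have hs'diff : Differentiable ℝ (deriv s) :=
    ((contDiff_infty_iff_deriv.mp (hs.of_le (by simp))).2).differentiable (by simp)
  -- deriv A = A * deriv s
  have hAderiv : ∀ y, deriv A y = A y * deriv s y := by
    intro y
    have hAeq : A = fun z => C₀ * Real.exp (s z) := funext hA
    rw [hAeq]
    rw [deriv_const_mul _ (hsdiff y).exp, _root_.deriv_exp (hsdiff y)]; ring
  have hAdiff : Differentiable ℝ A := by
    have hAeq : A = fun z => C₀ * Real.exp (s z) := funext hA
    rw [hAeq]; exact (hsdiff.exp).const_mul _
  have hA2 : deriv^[2] A x = A x * ((deriv s x) ^ 2 + deriv^[2] s x) := by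
    have : deriv A = fun y => A y * deriv s y := funext hAderiv
    show deriv (deriv A) x = _
    rw [this, deriv_fun_mul (hAdiff x) (hs'diff x), hAderiv x]
    simp [Function.iterate_succ, Function.iterate_one]
    ring
  have hAne : ((A x : ℝ) : ℂ) ≠ 0 := by
    rw [hA x]
    simp [hC₀, Real.exp_ne_zero]
  have hs2 : deriv^[2] s x = deriv (deriv s) x := rfl
  have h1 : wA x / ((A x : ℝ) : ℂ)
      = bc * (((deriv^[2] s x : ℝ) : ℂ) + 2 * (((deriv s x : ℝ) : ℂ)) ^ 2) := by
    rw [hwA x, hAderiv x, hu, hs2]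
    push_cast
    field_simp
    ring
  refine ⟨h1, ?_⟩
  have hbcI : -Complex.I * (ℏ : ℂ) * bc = (c₁ : ℂ) := by
    rw [hbc, hc₁]
    have hm' : (m : ℂ) ≠ 0 := by exact_mod_cast hm.ne'
    field_simp
    push_cast
    ring_nf
    rw [Complex.I_sq]
    field_simp
  calc -Complex.I * (ℏ : ℂ) * wA x / ((A x : ℝ) : ℂ)
      = -Complex.I * (ℏ : ℂ) * (wA x / ((A x : ℝ) : ℂ)) := by ring
    _ = (c₁ : ℂ) * (((deriv^[2] s x : ℝ) : ℂ) + 2 * (((deriv s x : ℝ) : ℂ)) ^ 2) := by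
        rw [h1, ← mul_assoc, hbcI]
    _ = _ := by
        rw [hA2]
        push_cast
        field_simp
        ring
end
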